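/- Let (X, τ) be a topological space and 𝒫 a primal on X. Then for every A ⊆ X, cl^⋄(cl^⋄(A)) = cl^⋄(A). -/
import Mathlib


/-- A collection `P` of subsets of `X` is a *primal* on `X` if `X ∉ P`,
`P` is downward closed, and `A ∩ B ∈ P` implies `A ∈ P` or `B ∈ P`. -/
def PrimalOn (X : Type*) (P : Set (Set X)) : Prop :=
  (Set.univ : Set X) ∉ P ∧
  (∀ A B : Set X, A ∈ P → B ⊆ A → B ∈ P) ∧
  (∀ A B : Set X, A ∩ B ∈ P → A ∈ P ∨ B ∈ P)
/-- The primal operator `A^⋄ = {x : ∀ open U ∋ x, Aᶜ ∪ Uᶜ ∈ P}`. -/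
def pdiam {X : Type*} [TopologicalSpace X] (P : Set (Set X)) (A : Set X) : Set X :=
  {x : X | ∀ U : Set X, IsOpen U → x ∈ U → Aᶜ ∪ Uᶜ ∈ P}
/-- The closure operator `cl^⋄(A) = A ∪ A^⋄`. -/
def clDiam {X : Type*} [TopologicalSpace X] (P : Set (Set X)) (A : Set X) : Set X :=
  A ∪ pdiam P A

lemma pdiam_pdiam_subset {X : Type*} [TopologicalSpace X] (P : Set (Set X))
    (hP : PrimalOn X P) (A : Set X) : pdiam P (pdiam P A) ⊆ pdiam P A := by
  intro x hx U hU hxU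
  by_contra h
  have hsub : U ⊆ (pdiam P A)ᶜ := by
    intro y hy hy'
    exact h (hy' U hU hy)
  have : (pdiam P A)ᶜ ∪ Uᶜ = Set.univ := by
    apply Set.eq_univ_of_forall
    intro y
    by_cases hy : y ∈ U
    · exact Or.inl (hsub hy)
    · exact Or.inr hy
  have := hx U hU hxU
  rw [‹(pdiam P A)ᶜ ∪ Uᶜ = Set.univ›] at this
  exact hP.1 this

lemma pdiam_union_subset {X : Type*} [TopologicalSpace X] (P : Set (Set X))
    (hP : PrimalOn X P) (A B : Set X) :
    pdiam P (A ∪ B) ⊆ pdiam P A ∪ pdiam P B := by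
  intro x hx
  by_contra h
  have hA : x ∉ pdiam P A := fun h' => h (Or.inl h')
  have hB : x ∉ pdiam P B := fun h' => h (Or.inr h')
  simp only [pdiam, Set.mem_setOf_eq, not_forall] at hA hB
  obtain ⟨U, hU, hxU, hUP⟩ := hA
  obtain ⟨V, hV, hxV, hVP⟩ := hB
  have hW := hx (U ∩ V) (hU.inter hV) ⟨hxU, hxV⟩
  have heq : (A ∪ B)ᶜ ∪ (U ∩ V)ᶜ = (Aᶜ ∪ Uᶜ ∪ Vᶜ) ∩ (Bᶜ ∪ Uᶜ ∪ Vᶜ) := by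
    ext y
    simp only [Set.mem_union, Set.mem_inter_iff, Set.mem_compl_iff, Set.compl_inter,
      Set.compl_union]
    tauto
  rw [heq] at hW
  rcases hP.2.2 _ _ hW with h1 | h1
  · refine hUP (hP.2.1 _ _ h1 ?_)
    intro y hy
    rcases hy with hy | hy
    · exact Or.inl (Or.inl hy)
    · exact Or.inl (Or.inr hy)
  · refine hVP (hP.2.1 _ _ h1 ?_)
    intro y hy
    rcases hy with hy | hy
    · exact Or.inl (Or.inl hy)
    · exact Or.inr hy

theorem clDiam_idem {X : Type*} [TopologicalSpace X] (P : Set (Set X))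
    (hP : PrimalOn X P) (A : Set X) :
    clDiam P (clDiam P A) = clDiam P A := by
  apply Set.Subset.antisymm
  · intro x hx
    rcases hx with hx | hx
    · exact hx
    · rcases pdiam_union_subset P hP A (pdiam P A) hx with h | h
      · exact Or.inr h
      · exact Or.inr (pdiam_pdiam_subset P hP A h)
  · exact Set.subset_union_left
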